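/- For positive definite s×s real matrices R and T, one has R ∘ T⁻¹ ⪰ Diag(R) (R ∘ T)⁻¹ Diag(R), in the Loewner order. -/

import Mathlib

/-!
Both `[[R, R], [R, R]]` and `[[T⁻¹, 1], [1, T]]` are positive semidefinite (the Schur complement
of `T` in the latter vanishes). By the Schur product theorem so is their Hadamard product
`[[R ⊙ T⁻¹, Diag R], [Diag R, R ⊙ T]]`, and its Schur complement with respect to the positive
definite block `R ⊙ T` is `R ⊙ T⁻¹ - Diag R (R ⊙ T)⁻¹ Diag R`.
-/

open Matrix
open scoped Matrix

namespace Matrix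

variable {m n α : Type*}

theorem fromBlocks_hadamard_fromBlocks [Mul α] (A A' : Matrix n n α) (B B' : Matrix n m α)
    (C C' : Matrix m n α) (D D' : Matrix m m α) :
    fromBlocks A B C D ⊙ fromBlocks A' B' C' D' =
      fromBlocks (A ⊙ A') (B ⊙ B') (C ⊙ C') (D ⊙ D') := by
  ext (i | i) (j | j) <;> rfl

variable [Fintype n] [DecidableEq n]

theorem PosSemidef.fromBlocks_self [Ring α] [PartialOrder α] [StarRing α] [StarOrderedRing α]
    {A : Matrix n n α} (hA : A.PosSemidef) : (fromBlocks A A A A).PosSemidef := by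
  have h := hA.conjTranspose_mul_mul_same (fromCols (1 : Matrix n n α) (1 : Matrix n n α))
  rwa [conjTranspose_fromCols_eq_fromRows_conjTranspose, conjTranspose_one, fromRows_mul,
    fromRows_mul, Matrix.one_mul, mul_fromCols, Matrix.mul_one,
    fromRows_fromCols_eq_fromBlocks] at h

theorem PosDef.fromBlocks_inv_one_one_self [Field α] [PartialOrder α] [StarRing α]
    [StarOrderedRing α] {T : Matrix n n α} (hT : T.PosDef) :
    (fromBlocks T⁻¹ 1 1 T).PosSemidef := by
  have : Invertible T := hT.isUnit.invertible
  have h := (hT.fromBlocks₂₂ T⁻¹ (1 : Matrix n n α)).mpr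
  rw [conjTranspose_one] at h
  exact h (by simpa using PosSemidef.zero)

end Matrix

/-- For positive definite `s×s` real matrices `R` and `T`, one has
`R ∘ T⁻¹ ⪰ Diag(R) (R ∘ T)⁻¹ Diag(R)` in the Loewner order. -/
theorem hadamard_inv_loewner_bound {s : ℕ} (R T : Matrix (Fin s) (Fin s) ℝ)
    (hR : R.PosDef) (hT : T.PosDef) :
    (R ⊙ T⁻¹ - Matrix.diagonal R.diag * (R ⊙ T)⁻¹ * Matrix.diagonal R.diag).PosSemidef := by
  have hRT : (R ⊙ T).PosDef := hR.hadamard hT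
  have : Invertible (R ⊙ T) := hRT.isUnit.invertible
  have hblock : (fromBlocks (R ⊙ T⁻¹) (diagonal R.diag) (diagonal R.diag)ᴴ
      (R ⊙ T)).PosSemidef := by
    rw [diagonal_conjTranspose, star_trivial]
    have h := hR.posSemidef.fromBlocks_self.hadamard hT.fromBlocks_inv_one_one_self
    rwa [fromBlocks_hadamard_fromBlocks, hadamard_one] at h
  simpa [diagonal_conjTranspose] using (hRT.fromBlocks₂₂ _ _).mp hblock
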